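/- Let r, t be integers, s a natural number, and z₁, z₂ complex numbers satisfying |z₁| > |z₂| > |z₁−z₂| > 0. Then both of the series ∑_{l=0}^{∞} (−1)^{s+l} · C(s+t+l+1−r, s) · C(−t−1, l) · z₁^{r−s−t−l−2} · z₂^{l} and ∑_{k=0}^{∞} C(r−1, k) · C(k−t−1, s) · z₂^{r−1−k} · (z₁−z₂)^{k−t−s−1} converge absolutely, and their sums are equal. -/

import Mathlib

/-!
Both series are expansions of the coefficient of `h ^ s` in
`(z₁ + h) ^ (r - 1) * (z₁ - z₂ + h) ^ (-t - 1)`, which by the Leibniz rule is the finite sum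
`∑_{i + j = s} C(r - 1, i) z₁ ^ (r - 1 - i) C(-t - 1, j) (z₁ - z₂) ^ (-t - 1 - j)`.

On the left, negating the upper index turns `(-1) ^ s C(s + t + l + 1 - r, s)` into
`C(r - t - l - 2, s)`, which Chu–Vandermonde splits as `∑ C(r - 1, i) C(-t - 1 - l, j)`; since
`C(-t - 1, l) C(-t - 1 - l, j) = C(-t - 1, j) C(-t - 1 - j, l)`, the sum over `l` is Newton's
binomial series of `(z₁ - z₂) ^ (-t - 1 - j)` in powers of `z₂ / z₁`.
On the right, Chu–Vandermonde splits `C(k - t - 1, s)` as `∑ C(k, i) C(-t - 1, j)`, and the sum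
over `k` is the binomial series of `(z₂ + (z₁ - z₂)) ^ (r - 1)` in powers of `(z₁ - z₂) / z₂`,
differentiated `i` times: `C(r - 1, k) C(k, i) = C(r - 1, i) C(r - 1 - i, k - i)`.
-/

open Finset

/-- The generalized binomial coefficient `C(n, j) = n(n-1)⋯(n-j+1)/j!`,
regarded as a complex number (equal to `1` when `j = 0`). -/
noncomputable def cbinom (n : ℤ) (j : ℕ) : ℂ :=
  (∏ i ∈ Finset.range j, ((n : ℂ) - (i : ℂ))) / (Nat.factorial j : ℂ)

theorem cbinom_eq_choose (n : ℤ) (j : ℕ) : cbinom n j = Ring.choose (n : ℂ) j := by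
  rw [Ring.choose_eq_smul, ← Polynomial.aeval_eq_smeval, Polynomial.aeval_def,
    Polynomial.eval₂_eq_eval_map, descPochhammer_map, descPochhammer_eval_eq_prod_range, cbinom,
    smul_eq_mul, div_eq_inv_mul]

section BinomialRing

variable {R : Type*} [CommRing R] [BinomialRing R]

theorem Ring.neg_one_pow_mul_choose (x : R) (n : ℕ) :
    (-1) ^ n * Ring.choose x n = Ring.choose (n - 1 - x) n := by
  rw [show (n : R) - 1 - x = -(x - n + 1) by ring, Ring.choose_neg,
    show x - n + 1 + n - 1 = x by ring, Units.smul_def, zsmul_eq_mul, Int.cast_negOnePow_natCast]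

theorem Ring.choose_mul_choose_sub_comm (x : R) (l j : ℕ) :
    Ring.choose x l * Ring.choose (x - l) j = Ring.choose x j * Ring.choose (x - j) l := by
  have hl := Ring.choose_smul_choose x (Nat.le_add_right l j)
  have hj := Ring.choose_smul_choose x (Nat.le_add_left j l)
  rw [Nat.add_sub_cancel_left] at hl
  rw [Nat.add_sub_cancel] at hj
  rw [← hl, ← hj, Nat.choose_symm_add]

end BinomialRing

theorem hasSum_choose_mul_pow (a : ℂ) {w : ℂ} (hw : ‖w‖ < 1) :
    HasSum (fun k : ℕ => Ring.choose a k * w ^ k) ((1 + w) ^ a) := by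
  have h := (Complex.one_add_cpow_hasFPowerSeriesOnBall_zero (a := a)).hasSum
    (y := w) (by simpa [enorm, ← NNReal.coe_lt_coe] using hw)
  simpa [binomialSeries, FormalMultilinearSeries.ofScalars_apply_eq, mul_comm] using h

theorem hasSum_choose_mul_zpow_mul_pow (b : ℤ) {x y : ℂ} (h : ‖y‖ < ‖x‖) :
    HasSum (fun l : ℕ => Ring.choose (b : ℂ) l * x ^ (b - l) * y ^ l) ((x + y) ^ b) := by
  have hx : x ≠ 0 := norm_pos_iff.mp ((norm_nonneg y).trans_lt h)
  have hw : ‖y / x‖ < 1 := by rwa [norm_div, div_lt_one (norm_pos_iff.mpr hx)]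
  have hser := (hasSum_choose_mul_pow (b : ℂ) hw).mul_left (x ^ b)
  rw [Complex.cpow_intCast, ← mul_zpow, mul_add, mul_one, mul_div_cancel₀ y hx] at hser
  refine hser.congr_fun fun l => ?_
  rw [zpow_sub₀ hx, div_pow, zpow_natCast]
  field_simp

theorem hasSum_choose_mul_choose_sub_mul_zpow_mul_pow (a : ℤ) (j : ℕ) {x y : ℂ}
    (h : ‖y‖ < ‖x‖) :
    HasSum (fun l : ℕ => Ring.choose (a : ℂ) l * Ring.choose ((a : ℂ) - l) j *
        x ^ (a - j - l) * y ^ l)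
      (Ring.choose (a : ℂ) j * (x + y) ^ (a - j)) := by
  have hser := (hasSum_choose_mul_zpow_mul_pow (a - j) h).mul_left (Ring.choose (a : ℂ) j)
  refine hser.congr_fun fun l => ?_
  rw [Ring.choose_mul_choose_sub_comm]
  push_cast
  ring

theorem hasSum_choose_mul_choose_natCast_mul_zpow_mul_zpow (a : ℤ) (i : ℕ) {x y : ℂ}
    (h : ‖y‖ < ‖x‖) :
    HasSum (fun k : ℕ => Ring.choose (a : ℂ) k * Ring.choose (k : ℂ) i *
        x ^ (a - k) * y ^ ((k : ℤ) - i))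
      (Ring.choose (a : ℂ) i * (x + y) ^ (a - i)) := by
  rw [← hasSum_nat_add_iff' i]
  have hvanish : ∑ k ∈ range i, Ring.choose (a : ℂ) k * Ring.choose (k : ℂ) i *
      x ^ (a - k) * y ^ ((k : ℤ) - i) = 0 :=
    sum_eq_zero fun k hk => by
      rw [Ring.choose_natCast, Nat.choose_eq_zero_of_lt (mem_range.mp hk)]
      simp
  rw [hvanish, sub_zero]
  have hser := (hasSum_choose_mul_zpow_mul_pow (a - i) h).mul_left (Ring.choose (a : ℂ) i)
  refine hser.congr_fun fun l => ?_
  have htri := Ring.choose_smul_choose (a : ℂ) (Nat.le_add_left i l)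
  rw [Nat.add_sub_cancel, nsmul_eq_mul, ← Ring.choose_natCast (R := ℂ)] at htri
  rw [mul_comm (Ring.choose (a : ℂ) (l + i)), htri,
    show a - ((l + i : ℕ) : ℤ) = a - i - l by push_cast; ring,
    show ((l + i : ℕ) : ℤ) - i = l by push_cast; ring, zpow_natCast, Int.cast_sub,
    Int.cast_natCast]
  ring

/-- The coefficient of `h ^ s` in `(x + h) ^ a * (y + h) ^ b`. -/
noncomputable def zpowMulZpowCoeff (a b : ℤ) (s : ℕ) (x y : ℂ) : ℂ :=
  ∑ p ∈ antidiagonal s,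
    Ring.choose (a : ℂ) p.1 * x ^ (a - p.1) * (Ring.choose (b : ℂ) p.2 * y ^ (b - p.2))

theorem hasSum_zpowMulZpowCoeff_of_norm_lt (r t : ℤ) (s : ℕ) {z₁ z₂ : ℂ}
    (h : ‖z₂‖ < ‖z₁‖) :
    HasSum (fun l : ℕ => (-1 : ℂ) ^ (s + l) * cbinom ((s : ℤ) + t + (l : ℤ) + 1 - r) s *
        cbinom (-t - 1) l * z₁ ^ (r - (s : ℤ) - t - (l : ℤ) - 2) * z₂ ^ l)
      (zpowMulZpowCoeff (r - 1) (-t - 1) s z₁ (z₁ - z₂)) := by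
  have hz₁ : z₁ ≠ 0 := norm_pos_iff.mp ((norm_nonneg z₂).trans_lt h)
  have hterm : ∀ l : ℕ, (-1 : ℂ) ^ (s + l) * cbinom ((s : ℤ) + t + (l : ℤ) + 1 - r) s *
        cbinom (-t - 1) l * z₁ ^ (r - (s : ℤ) - t - (l : ℤ) - 2) * z₂ ^ l =
      ∑ p ∈ antidiagonal s, Ring.choose ((r - 1 : ℤ) : ℂ) p.1 * z₁ ^ (r - 1 - p.1) *
        (Ring.choose ((-t - 1 : ℤ) : ℂ) l * Ring.choose (((-t - 1 : ℤ) : ℂ) - l) p.2 *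
          z₁ ^ (-t - 1 - p.2 - l) * (-z₂) ^ l) := by
    intro l
    rw [cbinom_eq_choose, cbinom_eq_choose, pow_add, mul_comm ((-1 : ℂ) ^ s),
      mul_assoc ((-1 : ℂ) ^ l), Ring.neg_one_pow_mul_choose,
      show (s : ℂ) - 1 - ((s + t + l + 1 - r : ℤ) : ℂ) =
        ((r - 1 : ℤ) : ℂ) + (((-t - 1 : ℤ) : ℂ) - l) by push_cast; ring,
      Ring.add_choose_eq _ (Commute.all _ _)]
    simp only [mul_sum, sum_mul]
    refine sum_congr rfl fun p hp => ?_
    have hs : p.1 + p.2 = s := mem_antidiagonal.mp hp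
    rw [neg_pow, show r - s - t - l - 2 = (r - 1 - p.1) + (-t - 1 - p.2 - l) by omega,
      zpow_add₀ hz₁]
    ring
  refine (hasSum_sum fun p _ => ?_).congr_fun hterm
  simpa only [← sub_eq_add_neg] using (hasSum_choose_mul_choose_sub_mul_zpow_mul_pow (-t - 1) p.2
    (x := z₁) (y := -z₂) (by rwa [norm_neg])).mul_left _

theorem hasSum_zpowMulZpowCoeff_of_norm_sub_lt (r t : ℤ) (s : ℕ) {z₁ z₂ : ℂ}
    (h : ‖z₁ - z₂‖ < ‖z₂‖) (hne : z₁ ≠ z₂) :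
    HasSum (fun k : ℕ => cbinom (r - 1) k * cbinom ((k : ℤ) - t - 1) s *
        z₂ ^ (r - 1 - (k : ℤ)) * (z₁ - z₂) ^ ((k : ℤ) - t - (s : ℤ) - 1))
      (zpowMulZpowCoeff (r - 1) (-t - 1) s z₁ (z₁ - z₂)) := by
  have hterm : ∀ k : ℕ, cbinom (r - 1) k * cbinom ((k : ℤ) - t - 1) s *
        z₂ ^ (r - 1 - (k : ℤ)) * (z₁ - z₂) ^ ((k : ℤ) - t - (s : ℤ) - 1) =
      ∑ p ∈ antidiagonal s, Ring.choose ((r - 1 : ℤ) : ℂ) k * Ring.choose (k : ℂ) p.1 *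
          z₂ ^ (r - 1 - k) * (z₁ - z₂) ^ ((k : ℤ) - p.1) *
        (Ring.choose ((-t - 1 : ℤ) : ℂ) p.2 * (z₁ - z₂) ^ (-t - 1 - p.2)) := by
    intro k
    rw [cbinom_eq_choose, cbinom_eq_choose,
      show (((k : ℤ) - t - 1 : ℤ) : ℂ) = (k : ℂ) + ((-t - 1 : ℤ) : ℂ) by push_cast; ring,
      Ring.add_choose_eq _ (Commute.all _ _)]
    simp only [mul_sum, sum_mul]
    refine sum_congr rfl fun p hp => ?_
    have hs : p.1 + p.2 = s := mem_antidiagonal.mp hp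
    rw [show (k : ℤ) - t - s - 1 = ((k : ℤ) - p.1) + (-t - 1 - p.2) by omega,
      zpow_add₀ (sub_ne_zero.mpr hne)]
    ring
  refine (hasSum_sum fun p _ => ?_).congr_fun hterm
  simpa only [add_sub_cancel] using
    (hasSum_choose_mul_choose_natCast_mul_zpow_mul_zpow (r - 1) p.1 h).mul_right _

theorem delta_identity_14_9_coefficients_agree (r t : ℤ) (s : ℕ) (z₁ z₂ : ℂ)
    (h₁ : ‖z₂‖ < ‖z₁‖)
    (h₂ : ‖z₁ - z₂‖ < ‖z₂‖)
    (h₃ : 0 < ‖z₁ - z₂‖) :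
    Summable (fun l : ℕ => ‖(-1 : ℂ) ^ (s + l) * cbinom ((s : ℤ) + t + (l : ℤ) + 1 - r) s *
        cbinom (-t - 1) l * z₁ ^ (r - (s : ℤ) - t - (l : ℤ) - 2) * z₂ ^ l‖) ∧
    Summable (fun k : ℕ => ‖cbinom (r - 1) k * cbinom ((k : ℤ) - t - 1) s *
        z₂ ^ (r - 1 - (k : ℤ)) * (z₁ - z₂) ^ ((k : ℤ) - t - (s : ℤ) - 1)‖) ∧
    ∑' l : ℕ, (-1 : ℂ) ^ (s + l) * cbinom ((s : ℤ) + t + (l : ℤ) + 1 - r) s *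
        cbinom (-t - 1) l * z₁ ^ (r - (s : ℤ) - t - (l : ℤ) - 2) * z₂ ^ l
      = ∑' k : ℕ, cbinom (r - 1) k * cbinom ((k : ℤ) - t - 1) s *
        z₂ ^ (r - 1 - (k : ℤ)) * (z₁ - z₂) ^ ((k : ℤ) - t - (s : ℤ) - 1) := by
  have hL := hasSum_zpowMulZpowCoeff_of_norm_lt r t s h₁
  have hR := hasSum_zpowMulZpowCoeff_of_norm_sub_lt r t s h₂ (sub_ne_zero.mp (norm_pos_iff.mp h₃))
  exact ⟨summable_norm_iff.mpr hL.summable, summable_norm_iff.mpr hR.summable,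
    hL.tsum_eq.trans hR.tsum_eq.symm⟩
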